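/- arXiv:2003.04757 — 2 statements merged into one kernel-verified Lean document; each statement's English description precedes it below -/
import Mathlib

section
/- Let $G$ be a group, let $\Gamma$ be a finite forest (acyclic graph) with vertex set $\{1,\dots,n\}$, and let $x_1,\dots,x_n \in G$ be elements satisfying $x_i^2 = 1$ for all $i$ and $x_i x_j = x_j x_i$ whenever $i$ and $j$ are not adjacent in $\Gamma$. Then for any two permutations $\pi, \pi'$ of $\{1,\dots,n\}$, the products $x_{\pi(1)} x_{\pi(2)} \cdots x_{\pi(n)}$ and $x_{\pi'(1)} x_{\pi'(2)} \cdots x_{\pi'(n)}$ are conjugate in $G$. -/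
/-!
Induct on the number of factors. If no two of the vertices involved are adjacent, all factors
commute and the products are equal. Otherwise the forest spanned by them has a leaf `v` with
unique neighbour `w`, so `x v` commutes with every other factor: conjugating cyclically brings
`x v` to the front of either product, from where it moves right until it meets `x w`. Replacing
`x w` by `x v * x w` and deleting `v` yields two shorter products over the same vertices, and
`x v * x w` still commutes with `x j` for every `j` not adjacent to `w`.
-/

namespace SimpleGraph

variable {V : Type*} {Γ : SimpleGraph V}

theorem IsAcyclic.exists_adj_forall_adj_eq [Finite V] (hΓ : Γ.IsAcyclic) {a b : V}
    (hab : Γ.Adj a b) : ∃ v w, Γ.Adj v w ∧ ∀ u, Γ.Adj v u → u = w := by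
  have : Nonempty V := ⟨a⟩
  -- A leaf is the start of a longest path: any other neighbour would extend it.
  obtain ⟨u, v, p, hp, hmax⟩ := Walk.exists_isPath_forall_isPath_length_le_length Γ
  have hnil : ¬p.Nil := fun h => by
    simpa [Walk.length_eq_zero_iff.mpr h] using
      hmax _ _ (Walk.cons hab Walk.nil) (by simp [hab.ne])
  refine ⟨u, p.snd, p.adj_snd hnil, fun w hadj => hΓ.eq_snd_of_adj_start hp hadj ?_⟩
  by_contra hw
  simpa using hmax _ _ _ (hp.cons hw (h := hadj.symm))

theorem IsAcyclic.exists_mem_adj_forall_mem_adj_eq {l : List V} (hΓ : Γ.IsAcyclic) {a b : V}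
    (ha : a ∈ l) (hb : b ∈ l) (hab : Γ.Adj a b) :
    ∃ v ∈ l, ∃ w ∈ l, Γ.Adj v w ∧ ∀ u ∈ l, Γ.Adj v u → u = w := by
  have : Finite {z | z ∈ l} := l.finite_toSet.to_subtype
  obtain ⟨⟨v, hv⟩, ⟨w, hw⟩, hvw, hleaf⟩ :=
    (hΓ.induce {z | z ∈ l}).exists_adj_forall_adj_eq (a := ⟨a, ha⟩) (b := ⟨b, hb⟩) hab
  exact ⟨v, hv, w, hw, hvw, fun u hu hvu => congrArg Subtype.val (hleaf ⟨u, hu⟩ hvu)⟩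

end SimpleGraph

section

variable {G : Type*} [Group G] {V : Type*}

theorem isConj_prod_map_erase (x : V → G) [DecidableEq V] {l : List V} {v : V} (hv : v ∈ l) :
    ∃ m : List V, m.Perm (l.erase v) ∧ IsConj (l.map x).prod (x v * (m.map x).prod) := by
  obtain ⟨a, b, -, rfl, hab⟩ := List.exists_erase_eq hv
  refine ⟨b ++ a, hab ▸ List.perm_append_comm, isConj_iff.2 ⟨(a.map x).prod⁻¹, ?_⟩⟩
  simp [mul_assoc]

theorem mul_prod_map_eq_prod_map_update [DecidableEq V] {x : V → G} {g : G} {w : V}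
    {l : List V} (hl : l.Nodup) (hw : w ∈ l) (hg : ∀ j ∈ l, j ≠ w → Commute g (x j)) :
    g * (l.map x).prod = (l.map (Function.update x w (g * x w))).prod := by
  induction l with
  | nil => simp at hw
  | cons j l ih =>
    rw [List.nodup_cons] at hl
    by_cases hjw : j = w
    · subst hjw
      have : l.map (Function.update x j (g * x j)) = l.map x :=
        List.map_congr_left fun u hu => Function.update_of_ne (ne_of_mem_of_not_mem hu hl.1) _ _
      simp [this, mul_assoc]
    · have hwl : w ∈ l := (List.mem_cons.mp hw).resolve_left (Ne.symm hjw)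
      rw [List.map_cons, List.prod_cons, List.map_cons, List.prod_cons,
        Function.update_of_ne hjw, ← mul_assoc, (hg j (by simp) hjw).eq, mul_assoc,
        ih hl.2 hwl fun i hi => hg i (List.mem_cons_of_mem _ hi)]

theorem exists_perm_erase_isConj_prod_map_update [DecidableEq V] {x : V → G} {l : List V}
    {v w : V} (hl : l.Nodup) (hv : v ∈ l) (hw : w ∈ l) (hvw : v ≠ w)
    (hcomm : ∀ j ∈ l, j ≠ w → Commute (x v) (x j)) :
    ∃ m : List V, m.Perm (l.erase v) ∧
      IsConj (l.map x).prod (m.map (Function.update x w (x v * x w))).prod := by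
  obtain ⟨m, hm, hconj⟩ := isConj_prod_map_erase x hv
  refine ⟨m, hm, ?_⟩
  rwa [mul_prod_map_eq_prod_map_update (hm.nodup_iff.2 (hl.erase v))
    (hm.mem_iff.2 ((List.mem_erase_of_ne hvw.symm).2 hw))
    fun j hj => hcomm j (List.mem_of_mem_erase (hm.mem_iff.1 hj))] at hconj

theorem commute_update_mul_of_forall_adj_eq [DecidableEq V] {Γ : SimpleGraph V} {x : V → G}
    {l : List V} {v w : V} (hcomm : ∀ i ∈ l, ∀ j ∈ l, ¬Γ.Adj i j → Commute (x i) (x j))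
    (hv : v ∈ l) (hw : w ∈ l) (hleaf : ∀ u ∈ l, Γ.Adj v u → u = w) :
    ∀ i ∈ l, ∀ j ∈ l, ¬Γ.Adj i j →
      Commute (Function.update x w (x v * x w) i) (Function.update x w (x v * x w) j) := by
  have hmerged : ∀ j ∈ l, j ≠ w → ¬Γ.Adj w j → Commute (x v * x w) (x j) :=
    fun j hj hjw hwj => (hcomm v hv j hj (mt (hleaf j hj) hjw)).mul_left (hcomm w hw j hj hwj)
  intro i hi j hj hij
  obtain rfl | hiw := eq_or_ne w i
  · obtain rfl | hjw := eq_or_ne w j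
    · exact Commute.refl _
    · simpa [Function.update_of_ne hjw.symm] using hmerged j hj hjw.symm hij
  · obtain rfl | hjw := eq_or_ne w j
    · simpa [Function.update_of_ne hiw.symm] using (hmerged i hi hiw.symm (hij ∘ .symm)).symm
    · simpa [Function.update_of_ne hiw.symm, Function.update_of_ne hjw.symm] using
        hcomm i hi j hj hij

theorem SimpleGraph.IsAcyclic.isConj_prod_map_of_perm {Γ : SimpleGraph V} (hΓ : Γ.IsAcyclic)
    {x : V → G} {l₁ l₂ : List V} (hl₁ : l₁.Nodup) (hperm : l₁.Perm l₂)
    (hcomm : ∀ i ∈ l₁, ∀ j ∈ l₁, ¬Γ.Adj i j → Commute (x i) (x j)) :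
    IsConj (l₁.map x).prod (l₂.map x).prod := by
  classical
  by_cases hedge : ∃ i ∈ l₁, ∃ j ∈ l₁, Γ.Adj i j
  · obtain ⟨i, hi, j, hj, hij⟩ := hedge
    obtain ⟨v, hv, w, hw, hvw, hleaf⟩ := hΓ.exists_mem_adj_forall_mem_adj_eq hi hj hij
    have hxv : ∀ j ∈ l₁, j ≠ w → Commute (x v) (x j) := fun j hj hjw =>
      hcomm v hv j hj (mt (hleaf j hj) hjw)
    obtain ⟨m₁, hm₁, hconj₁⟩ :=
      exists_perm_erase_isConj_prod_map_update hl₁ hv hw hvw.ne hxv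
    obtain ⟨m₂, hm₂, hconj₂⟩ := exists_perm_erase_isConj_prod_map_update
      (hperm.nodup_iff.1 hl₁) (hperm.subset hv) (hperm.subset hw) hvw.ne
      fun j hj => hxv j (hperm.symm.subset hj)
    have hsub : m₁ ⊆ l₁ := fun j hj => List.mem_of_mem_erase (hm₁.subset hj)
    have hlen := hm₁.length_eq ▸ List.length_erase_of_mem hv
    have hcontracted := hΓ.isConj_prod_map_of_perm (hm₁.nodup_iff.2 (hl₁.erase v))
      (hm₁.trans ((hperm.erase v).trans hm₂.symm))
      fun i hi j hj => commute_update_mul_of_forall_adj_eq hcomm hv hw hleaf i (hsub hi) j (hsub hj)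
    exact hconj₁.trans (hcontracted.trans hconj₂.symm)
  · push Not at hedge
    rw [(hperm.map x).prod_eq' (List.pairwise_map.2 (List.pairwise_of_forall_mem_list
      fun i hi j hj => hcomm i hi j hj (hedge i hi j hj)))]
termination_by l₁.length
decreasing_by
  have := List.length_pos_of_mem hv
  omega

end

theorem products_conjugate_of_forest_general
    {G : Type*} [Group G] {n : ℕ}
    (Γ : SimpleGraph (Fin n)) (hforest : Γ.IsAcyclic)
    (x : Fin n → G)
    (hcomm : ∀ i j, ¬ Γ.Adj i j → Commute (x i) (x j))
    (π π' : Equiv.Perm (Fin n)) :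
    IsConj (((List.finRange n).map (fun i => x (π i))).prod)
           (((List.finRange n).map (fun i => x (π' i))).prod) := by
  have h := hforest.isConj_prod_map_of_perm (x := x) ((List.nodup_finRange n).map π.injective)
    (π.map_finRange_perm.trans π'.map_finRange_perm.symm) fun i _ j _ => hcomm i j
  simpa only [List.map_map, Function.comp_def] using h

/-- Let `G` be a group, `Γ` a finite forest with vertex set `{1, …, n}`, and
`x₁, …, xₙ ∈ G` elements with `xᵢ² = 1` which commute whenever the corresponding
vertices are non-adjacent in `Γ`.  Then the products of all the `xᵢ`, each occurring
exactly once, taken in any two orders, are conjugate in `G`. -/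
theorem products_conjugate_of_forest
    {G : Type*} [Group G] {n : ℕ}
    (Γ : SimpleGraph (Fin n)) (hforest : Γ.IsAcyclic)
    (x : Fin n → G) (hsq : ∀ i, (x i) ^ 2 = 1)
    (hcomm : ∀ i j, ¬ Γ.Adj i j → Commute (x i) (x j))
    (π π' : Equiv.Perm (Fin n)) :
    IsConj (((List.finRange n).map (fun i => x (π i))).prod)
           (((List.finRange n).map (fun i => x (π' i))).prod) :=
  products_conjugate_of_forest_general Γ hforest x hcomm π π'
end

section
/- Let $G$ be a group, $\Gamma$ a finite forest with vertex set $\{1,\dots,n\}$, and $x_1,\dots,x_n \in G$ with $x_i^2 = 1$ for all $i$ and $x_i x_j = x_j x_i$ whenever $i,j$ are non-adjacent in $\Gamma$. Set $c = x_1 x_2 \cdots x_n$. Then $c$ is conjugate in $G$ to $c^{-1}$. -/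
/-!
Induct on the number of factors, allowing any reordering of the list on both sides. A finite
forest has a vertex `v` with at most one neighbour `w`, so `xᵥ` commutes with every other factor
except `x_w`. Rotating both products cyclically (a conjugation) moves `xᵥ` to the end; then
`xᵥ` can be absorbed into `x_w` in both products. This contracts the edge `vw`, and the
contracted data again satisfy the commutation hypotheses. Since `xᵢ⁻¹ = xᵢ`, `c⁻¹` is the
product in the reversed order.
-/

namespace SimpleGraph

variable {V : Type*} {G : SimpleGraph V}

theorem IsAcyclic.exists_neighborSet_subsingleton [Nonempty V] [Finite G.edgeSet]
    (hG : G.IsAcyclic) : ∃ v, (G.neighborSet v).Subsingleton := by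
  -- the start of a longest path: a neighbour off the path would extend it
  obtain ⟨u, v, p, hp, hmax⟩ := Walk.exists_isPath_forall_isPath_length_le_length G
  have on_path : ∀ w ∈ G.neighborSet u, w = p.snd := fun w hw => by
    refine hG.eq_snd_of_adj_start hp hw (not_not.mp fun hwp => ?_)
    have := hmax _ _ _ (hp.cons hwp (h := G.adj_symm hw))
    simp at this
  exact ⟨u, fun a ha b hb => (on_path a ha).trans (on_path b hb).symm⟩

theorem IsAcyclic.exists_mem_forall_adj_eq (hG : G.IsAcyclic) {s : Finset V}
    (hs : s.Nontrivial) :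
    ∃ v ∈ s, ∃ w ∈ s, w ≠ v ∧ ∀ u ∈ s, G.Adj v u → u = w := by
  have : Nonempty s := hs.nonempty.to_subtype
  obtain ⟨⟨v, hv⟩, hleaf⟩ := (hG.induce s).exists_neighborSet_subsingleton
  by_cases hadj : ∃ w ∈ s, G.Adj v w
  · obtain ⟨w, hw, hvw⟩ := hadj
    refine ⟨v, hv, w, hw, hvw.ne', fun u hu hvu => ?_⟩
    exact congrArg Subtype.val (@hleaf ⟨u, hu⟩ hvu ⟨w, hw⟩ hvw)
  · obtain ⟨w, hw, hwv⟩ := hs.exists_ne v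
    exact ⟨v, hv, w, hw, hwv, fun u hu hvu => (hadj ⟨u, hu, hvu⟩).elim⟩

end SimpleGraph

section

variable {α : Type*} [Group α]

theorem isConj_mul_comm (a b : α) : IsConj (a * b) (b * a) :=
  isConj_iff.mpr ⟨a⁻¹, by group⟩

variable {V : Type*}

theorem List.exists_cons_perm_isConj_prod_map_mul {L : List V} {v : V} (hv : v ∈ L)
    (x : V → α) :
    ∃ M, (v :: M).Perm L ∧ IsConj (L.map x).prod ((M.map x).prod * x v) := by
  obtain ⟨P, Q, rfl⟩ := List.append_of_mem hv
  refine ⟨Q ++ P, (List.perm_append_comm.cons v).trans List.perm_middle.symm, ?_⟩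
  simpa [mul_assoc] using isConj_mul_comm ((P.map x).prod * x v) (Q.map x).prod

theorem List.prod_map_update_mul [DecidableEq V] {L : List V} (hL : L.Nodup) {w : V}
    (hw : w ∈ L) (x : V → α) {g : α} (hg : ∀ j ∈ L, j ≠ w → Commute (x j) g) :
    (L.map (Function.update x w (x w * g))).prod = (L.map x).prod * g := by
  induction L with
  | nil => simp at hw
  | cons a L ih =>
    obtain ⟨haL, hL⟩ := List.nodup_cons.mp hL
    by_cases haw : a = w
    · subst haw
      have hg' : Commute g (L.map x).prod := Commute.list_prod_right _ _ fun y hy => by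
        obtain ⟨j, hj, rfl⟩ := List.mem_map.mp hy
        exact (hg j (List.mem_cons_of_mem _ hj) (ne_of_mem_of_not_mem hj haL)).symm
      rw [List.map_cons, List.map_congr_left fun j hj =>
        Function.update_of_ne (ne_of_mem_of_not_mem hj haL) _ _]
      simp [mul_assoc, hg'.eq]
    · have hwL : w ∈ L := (List.mem_cons.mp hw).resolve_left (Ne.symm haw)
      simp [Function.update_of_ne haw, ih hL hwL fun j hj => hg j (List.mem_cons_of_mem _ hj),
        mul_assoc]

theorem Commute.update_mul [DecidableEq V] {x : V → α} {w i j : V} {g : α}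
    (hij : Commute (x i) (x j)) (hi : i ≠ w → Commute (x i) g)
    (hj : j ≠ w → Commute (x j) g) :
    Commute (Function.update x w (x w * g) i) (Function.update x w (x w * g) j) := by
  by_cases hiw : i = w <;> by_cases hjw : j = w
  · simp [hiw, hjw]
  · simpa [hiw, hjw] using (hiw ▸ hij).mul_left (hj hjw).symm
  · simpa [hiw, hjw] using (hjw ▸ hij).mul_right (hi hiw)
  · simpa [hiw, hjw] using hij

theorem SimpleGraph.IsAcyclic.isConj_prod_map_of_perm_s10 [DecidableEq V] {Γ : SimpleGraph V}
    (hΓ : Γ.IsAcyclic) {x : V → α} {L L' : List V} (hL : L.Nodup) (hperm : L'.Perm L)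
    (hx : ∀ i ∈ L, ∀ j ∈ L, ¬Γ.Adj i j → Commute (x i) (x j)) :
    IsConj (L.map x).prod (L'.map x).prod := by
  obtain ⟨n, hn⟩ : ∃ n, L.length = n := ⟨_, rfl⟩
  induction n generalizing L L' x with
  | zero =>
    obtain rfl := List.length_eq_zero_iff.mp hn
    rw [List.perm_nil.mp hperm]
  | succ n ih =>
    rcases n.eq_zero_or_pos with rfl | hn_pos
    · obtain ⟨a, rfl⟩ := List.length_eq_one_iff.mp hn
      rw [List.perm_singleton.mp hperm]
    have hs : L.toFinset.Nontrivial := by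
      rw [← Finset.one_lt_card_iff_nontrivial, List.toFinset_card_of_nodup hL]
      omega
    obtain ⟨v, hv, w, hw, hwv, hleaf⟩ := hΓ.exists_mem_forall_adj_eq hs
    simp only [List.mem_toFinset] at hv hw hleaf
    obtain ⟨M, hM, hLM⟩ := List.exists_cons_perm_isConj_prod_map_mul hv x
    obtain ⟨M', hM', hLM'⟩ :=
      List.exists_cons_perm_isConj_prod_map_mul (hperm.mem_iff.mpr hv) x
    have hMM' : M'.Perm M := (hM'.trans (hperm.trans hM.symm)).cons_inv
    have hMnd : M.Nodup := (hM.nodup_iff.mpr hL).of_cons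
    have hML : ∀ j ∈ M, j ∈ L := fun j hj => hM.subset (List.mem_cons_of_mem v hj)
    have hwM : w ∈ M := (List.mem_cons.mp (hM.symm.subset hw)).resolve_left hwv
    have hv_comm : ∀ j ∈ M, j ≠ w → Commute (x j) (x v) := fun j hj hjw =>
      hx j (hML j hj) v hv fun hjv => hjw (hleaf j (hML j hj) hjv.symm)
    have hv_comm' : ∀ j ∈ M', j ≠ w → Commute (x j) (x v) := fun j hj =>
      hv_comm j (hMM'.mem_iff.mp hj)
    have hlen : M.length = n := by simpa [hn] using hM.length_eq
    have ih_contracted := ih (x := Function.update x w (x w * x v)) hMnd hMM'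
      (fun i hi j hj hij => (hx i (hML i hi) j (hML j hj) hij).update_mul
        (hv_comm i hi) (hv_comm j hj)) hlen
    rw [List.prod_map_update_mul hMnd hwM x hv_comm,
      List.prod_map_update_mul (hMM'.nodup_iff.mpr hMnd) (hMM'.mem_iff.mpr hwM) x hv_comm']
      at ih_contracted
    exact hLM.trans (ih_contracted.trans hLM'.symm)

end

/-- Let `G` be a group, `Γ` a finite forest with vertex set `{1, …, n}`, and
`x₁, …, xₙ ∈ G` with `xᵢ² = 1`, commuting whenever the corresponding vertices are
non-adjacent in `Γ`.  Then `c = x₁ x₂ ⋯ xₙ` is conjugate in `G` to `c⁻¹`. -/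
theorem product_conjugate_to_inverse_of_forest
    {G : Type*} [Group G] {n : ℕ}
    (Γ : SimpleGraph (Fin n)) (hforest : Γ.IsAcyclic)
    (x : Fin n → G) (hsq : ∀ i, (x i) ^ 2 = 1)
    (hcomm : ∀ i j, ¬ Γ.Adj i j → Commute (x i) (x j)) :
    IsConj (((List.finRange n).map x).prod) (((List.finRange n).map x).prod)⁻¹ := by
  have hinv : (· ⁻¹) ∘ x = x :=
    funext fun i => inv_eq_of_mul_eq_one_right (by rw [← sq, hsq])
  rw [List.prod_inv_reverse, List.map_map, hinv, ← List.map_reverse]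
  exact hforest.isConj_prod_map_of_perm_s10 (List.nodup_finRange n) (List.reverse_perm _)
    fun i _ j _ => hcomm i j
end
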